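/- If K is a binary sparsity pattern satisfying K G K ≤ K (Boolean operations), then for every r ∈ ℕ, K (G K)^r ≤ K; i.e., quadratic invariance implies closure under all higher-order compositions. -/

import Mathlib

/-- Boolean (OR/AND semiring) matrix multiplication. -/
noncomputable def bmul {a b c : ℕ} (X : Matrix (Fin a) (Fin b) Bool) (Y : Matrix (Fin b) (Fin c) Bool) :
    Matrix (Fin a) (Fin c) Bool :=
  fun i k => Finset.univ.sup fun j => X i j && Y j k

/-- Entrywise Boolean (OR) addition of matrices. -/
def badd {a b : ℕ} (X Y : Matrix (Fin a) (Fin b) Bool) : Matrix (Fin a) (Fin b) Bool :=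
  fun i j => X i j || Y i j

/-- The sequence Z_0 = K, Z_{m+1} = Z_m + Z_m G Z_m. -/
noncomputable def Zseq {nu ny : ℕ} (K : Matrix (Fin nu) (Fin ny) Bool) (G : Matrix (Fin ny) (Fin nu) Bool) :
    ℕ → Matrix (Fin nu) (Fin ny) Bool
  | 0 => K
  | m + 1 => badd (Zseq K G m) (bmul (bmul (Zseq K G m) G) (Zseq K G m))

/-- kterm K G s = K (G K)^s in the Boolean semiring. -/
noncomputable def kterm {nu ny : ℕ} (K : Matrix (Fin nu) (Fin ny) Bool) (G : Matrix (Fin ny) (Fin nu) Bool) :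
    ℕ → Matrix (Fin nu) (Fin ny) Bool
  | 0 => K
  | s + 1 => bmul (kterm K G s) (bmul G K)

/-- Boolean (OR) sum of the matrices f 0, ..., f (N-1). -/
noncomputable def bsum {a b : ℕ} (N : ℕ) (f : ℕ → Matrix (Fin a) (Fin b) Bool) :
    Matrix (Fin a) (Fin b) Bool :=
  fun i j => (Finset.range N).sup fun s => f s i j

/-- Number of nonzero (true) entries. -/
def ncount {a b : ℕ} (Z : Matrix (Fin a) (Fin b) Bool) : ℕ :=
  ∑ i : Fin a, ∑ j : Fin b, if Z i j then 1 else 0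

section BoolMatrix

variable {a b c d : ℕ}

theorem bmul_eq_true_iff (X : Matrix (Fin a) (Fin b) Bool) (Y : Matrix (Fin b) (Fin c) Bool)
    (i : Fin a) (k : Fin c) :
    bmul X Y i k = true ↔ ∃ j, X i j = true ∧ Y j k = true := by
  simp only [bmul]
  rw [show (true : Bool) = ⊤ from rfl, Finset.sup_eq_top_iff]
  simp

theorem bmul_assoc (X : Matrix (Fin a) (Fin b) Bool) (Y : Matrix (Fin b) (Fin c) Bool)
    (Z : Matrix (Fin c) (Fin d) Bool) :
    bmul (bmul X Y) Z = bmul X (bmul Y Z) := by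
  ext i l
  rw [Bool.eq_iff_iff]
  simp only [bmul_eq_true_iff]
  constructor
  · rintro ⟨k, ⟨j, hXij, hYjk⟩, hZkl⟩
    exact ⟨j, hXij, k, hYjk, hZkl⟩
  · rintro ⟨j, hXij, k, hYjk, hZkl⟩
    exact ⟨k, ⟨j, hXij, hYjk⟩, hZkl⟩

theorem bmul_le_bmul_right {X X' : Matrix (Fin a) (Fin b) Bool} (Y : Matrix (Fin b) (Fin c) Bool)
    (hX : ∀ i j, X i j ≤ X' i j) (i : Fin a) (k : Fin c) :
    bmul X Y i k ≤ bmul X' Y i k :=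
  Finset.sup_mono_fun fun j _ => inf_le_inf_right (Y j k) (hX i j)

end BoolMatrix

theorem stmt18 {nu ny : ℕ} (K : Matrix (Fin nu) (Fin ny) Bool)
    (G : Matrix (Fin ny) (Fin nu) Bool)
    (hQI : ∀ k l, bmul (bmul K G) K k l ≤ K k l) :
    ∀ (r : ℕ) (k : Fin nu) (l : Fin ny), kterm K G r k l ≤ K k l := by
  intro r
  induction r with
  | zero => exact fun _ _ => le_rfl
  | succ s ih =>
    intro k l
    calc kterm K G (s + 1) k l = bmul (kterm K G s) (bmul G K) k l := rfl
      _ ≤ bmul K (bmul G K) k l := bmul_le_bmul_right _ ih k l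
      _ = bmul (bmul K G) K k l := by rw [bmul_assoc]
      _ ≤ K k l := hQI k l
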